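/- arXiv:1106.3673 — 7 statements merged into one kernel-verified Lean document; each statement's English description precedes it below -/
import Mathlib

section
/- There is no unit-speed solution of the system (S) on a nondegenerate interval whose third component has identically vanishing derivative. That is, if x, y, z : I → ℝ are twice differentiable on a nondegenerate interval I, satisfy x'' = x·z', y'' = y·z', z'' = −(x·x' + y·y'), have unit speed x'² + y'² + z'² = 1 on I, then z' cannot vanish identically on I. -/
/-!
If `z' ≡ 0`, the first two equations give `x'' = y'' = 0`, so `f = x x' + y y'` has derivative
`x'² + y'² + x x'' + y y'' = x'² + y'² = 1`. But the third equation says `f = -z'' = 0` on a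
neighbourhood of an interior point of `I`, where `f'` must then vanish.
-/

open Filter Set Topology

lemma Set.OrdConnected.mem_nhds_of_mem_Ioo {α : Type*} [LinearOrder α] [TopologicalSpace α]
    [OrderTopology α] {S : Set α} {a b c : α} (hS : S.OrdConnected) (ha : a ∈ S) (hb : b ∈ S)
    (hc : c ∈ Ioo a b) : S ∈ 𝓝 c :=
  mem_of_superset (Ioo_mem_nhds hc.1 hc.2) (Ioo_subset_Icc_self.trans (hS.out ha hb))

lemma Set.OrdConnected.exists_mem_nhds {α : Type*} [LinearOrder α] [DenselyOrdered α]
    [TopologicalSpace α] [OrderTopology α] {S : Set α} {a b : α} (hS : S.OrdConnected)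
    (ha : a ∈ S) (hb : b ∈ S) (hab : a ≠ b) : ∃ c, S ∈ 𝓝 c := by
  rcases hab.lt_or_gt with hlt | hlt
  · obtain ⟨c, hc⟩ := exists_between hlt
    exact ⟨c, hS.mem_nhds_of_mem_Ioo ha hb hc⟩
  · obtain ⟨c, hc⟩ := exists_between hlt
    exact ⟨c, hS.mem_nhds_of_mem_Ioo hb ha hc⟩

lemma hasDerivAt_mul_deriv {f : ℝ → ℝ} {t : ℝ} (hf : DifferentiableAt ℝ f t)
    (hf' : DifferentiableAt ℝ (deriv f) t) :
    HasDerivAt (fun s ↦ f s * deriv f s) (deriv f t ^ 2 + f t * deriv (deriv f) t) t := by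
  simpa only [sq] using hf.hasDerivAt.fun_mul hf'.hasDerivAt

theorem no_horizontal_trajectory_general (I : Set ℝ) (hI : I.OrdConnected)
    (a b : ℝ) (ha : a ∈ I) (hb : b ∈ I) (hab : a ≠ b)
    (x y z : ℝ → ℝ)
    (hx : ∀ t ∈ I, DifferentiableAt ℝ x t) (hx' : ∀ t ∈ I, DifferentiableAt ℝ (deriv x) t)
    (hy : ∀ t ∈ I, DifferentiableAt ℝ y t) (hy' : ∀ t ∈ I, DifferentiableAt ℝ (deriv y) t)
    (h1 : ∀ t ∈ I, deriv (deriv x) t = x t * deriv z t)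
    (h2 : ∀ t ∈ I, deriv (deriv y) t = y t * deriv z t)
    (h3 : ∀ t ∈ I, deriv (deriv z) t = -(x t * deriv x t + y t * deriv y t))
    (hunit : ∀ t ∈ I, deriv x t ^ 2 + deriv y t ^ 2 + deriv z t ^ 2 = 1) :
    ¬ (∀ t ∈ I, deriv z t = 0) := by
  intro h0
  obtain ⟨m, hm⟩ := hI.exists_mem_nhds ha hb hab
  have hmI : m ∈ I := mem_of_mem_nhds hm
  have hz0 : deriv z =ᶠ[𝓝 m] fun _ ↦ 0 := eventually_of_mem hm h0
  have hf0 : (fun t ↦ x t * deriv x t + y t * deriv y t) =ᶠ[𝓝 m] fun _ ↦ 0 := by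
    filter_upwards [hz0.deriv, hm] with t hzt htI
    rw [← neg_eq_zero, ← h3 t htI, hzt, deriv_const]
  have hf' : HasDerivAt (fun t ↦ x t * deriv x t + y t * deriv y t)
      (deriv x m ^ 2 + deriv y m ^ 2) m := by
    simpa [h1 m hmI, h2 m hmI, h0 m hmI] using
      (hasDerivAt_mul_deriv (hx m hmI) (hx' m hmI)).fun_add
        (hasDerivAt_mul_deriv (hy m hmI) (hy' m hmI))
  have hspeed : deriv x m ^ 2 + deriv y m ^ 2 = 0 := by
    rw [← hf'.deriv, hf0.deriv_eq, deriv_const]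
  simpa [h0 m hmI, hspeed] using hunit m hmI

/-- There are no horizontal unit-speed magnetic trajectories: for a unit-speed solution of
the system `x'' = x·z'`, `y'' = y·z'`, `z'' = −(x·x' + y·y')` on a nondegenerate interval `I`,
the derivative `z'` cannot vanish identically on `I`. -/
theorem no_horizontal_trajectory (I : Set ℝ) (hI : I.OrdConnected)
    (a b : ℝ) (ha : a ∈ I) (hb : b ∈ I) (hab : a ≠ b)
    (x y z : ℝ → ℝ)
    (hx : ∀ t ∈ I, DifferentiableAt ℝ x t) (hx' : ∀ t ∈ I, DifferentiableAt ℝ (deriv x) t)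
    (hy : ∀ t ∈ I, DifferentiableAt ℝ y t) (hy' : ∀ t ∈ I, DifferentiableAt ℝ (deriv y) t)
    (hz : ∀ t ∈ I, DifferentiableAt ℝ z t) (hz' : ∀ t ∈ I, DifferentiableAt ℝ (deriv z) t)
    (h1 : ∀ t ∈ I, deriv (deriv x) t = x t * deriv z t)
    (h2 : ∀ t ∈ I, deriv (deriv y) t = y t * deriv z t)
    (h3 : ∀ t ∈ I, deriv (deriv z) t = -(x t * deriv x t + y t * deriv y t))
    (hunit : ∀ t ∈ I, deriv x t ^ 2 + deriv y t ^ 2 + deriv z t ^ 2 = 1) :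
    ¬ (∀ t ∈ I, deriv z t = 0) :=
  no_horizontal_trajectory_general I hI a b ha hb hab x y z hx hx' hy hy' h1 h2 h3 hunit
end

section
/- Let x, y, z : ℝ → ℝ be twice differentiable functions satisfying x'' = x·z', y'' = y·z', z'' = −(x·x' + y·y'), and suppose x(t) = ρ(t)·cos(φ(t)), y(t) = ρ(t)·sin(φ(t)) for differentiable functions ρ, φ : ℝ → ℝ with ρ(t) > 0 for all t. Then the function t ↦ ρ(t)²·φ'(t) is constant. -/
/-! In the plane, `x y' - y x'` equals `ρ² φ'` in polar coordinates, and its derivative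
`x y'' - y x''` vanishes as soon as `x''` and `y''` are the same multiple (here `z'`) of `x` and `y`. -/

open Real

theorem cross_deriv_eq_sq_mul_deriv_of_polar {x y ρ φ : ℝ → ℝ} {t : ℝ}
    (hρ : DifferentiableAt ℝ ρ t) (hφ : DifferentiableAt ℝ φ t)
    (hxρφ : ∀ s, x s = ρ s * cos (φ s)) (hyρφ : ∀ s, y s = ρ s * sin (φ s)) :
    x t * deriv y t - y t * deriv x t = ρ t ^ 2 * deriv φ t := by
  obtain rfl : x = fun s => ρ s * cos (φ s) := funext hxρφ
  obtain rfl : y = fun s => ρ s * sin (φ s) := funext hyρφ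
  have hdx : HasDerivAt (fun s => ρ s * cos (φ s))
      (deriv ρ t * cos (φ t) + ρ t * (-sin (φ t) * deriv φ t)) t :=
    hρ.hasDerivAt.mul ((hasDerivAt_cos (φ t)).comp t hφ.hasDerivAt)
  have hdy : HasDerivAt (fun s => ρ s * sin (φ s))
      (deriv ρ t * sin (φ t) + ρ t * (cos (φ t) * deriv φ t)) t :=
    hρ.hasDerivAt.mul ((hasDerivAt_sin (φ t)).comp t hφ.hasDerivAt)
  rw [hdx.deriv, hdy.deriv]
  linear_combination ρ t ^ 2 * deriv φ t * sin_sq_add_cos_sq (φ t)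

theorem cross_deriv_const_of_deriv_deriv_eq_mul {x y w : ℝ → ℝ}
    (hx : Differentiable ℝ x) (hx' : Differentiable ℝ (deriv x))
    (hy : Differentiable ℝ y) (hy' : Differentiable ℝ (deriv y))
    (hxw : ∀ t, deriv (deriv x) t = x t * w t) (hyw : ∀ t, deriv (deriv y) t = y t * w t)
    (s t : ℝ) :
    x s * deriv y s - y s * deriv x s = x t * deriv y t - y t * deriv x t := by
  refine is_const_of_deriv_eq_zero ((hx.mul hy').sub (hy.mul hx')) (fun t => ?_) s t
  rw [(((hx t).hasDerivAt.mul (hy' t).hasDerivAt).sub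
    ((hy t).hasDerivAt.mul (hx' t).hasDerivAt)).deriv, hxw, hyw]
  ring

theorem angular_momentum_constant_general (x y z ρ φ : ℝ → ℝ)
    (hx : Differentiable ℝ x) (hx' : Differentiable ℝ (deriv x))
    (hy : Differentiable ℝ y) (hy' : Differentiable ℝ (deriv y))
    (h1 : ∀ t : ℝ, deriv (deriv x) t = x t * deriv z t)
    (h2 : ∀ t : ℝ, deriv (deriv y) t = y t * deriv z t)
    (hρ : Differentiable ℝ ρ) (hφ : Differentiable ℝ φ)
    (hxρφ : ∀ t : ℝ, x t = ρ t * Real.cos (φ t))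
    (hyρφ : ∀ t : ℝ, y t = ρ t * Real.sin (φ t)) :
    ∀ s t : ℝ, ρ s ^ 2 * deriv φ s = ρ t ^ 2 * deriv φ t := by
  intro s t
  rw [← cross_deriv_eq_sq_mul_deriv_of_polar (hρ s) (hφ s) hxρφ hyρφ,
    ← cross_deriv_eq_sq_mul_deriv_of_polar (hρ t) (hφ t) hxρφ hyρφ]
  exact cross_deriv_const_of_deriv_deriv_eq_mul hx hx' hy hy' h1 h2 s t

/-- In cylindrical coordinates `x = ρ cos φ`, `y = ρ sin φ` (with `ρ > 0`), the angular
momentum `ρ²·φ'` of a solution of the system `x'' = x·z'`, `y'' = y·z'`,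
`z'' = −(x·x' + y·y')` is constant. -/
theorem angular_momentum_constant (x y z ρ φ : ℝ → ℝ)
    (hx : Differentiable ℝ x) (hx' : Differentiable ℝ (deriv x))
    (hy : Differentiable ℝ y) (hy' : Differentiable ℝ (deriv y))
    (hz : Differentiable ℝ z) (hz' : Differentiable ℝ (deriv z))
    (h1 : ∀ t : ℝ, deriv (deriv x) t = x t * deriv z t)
    (h2 : ∀ t : ℝ, deriv (deriv y) t = y t * deriv z t)
    (h3 : ∀ t : ℝ, deriv (deriv z) t = -(x t * deriv x t + y t * deriv y t))
    (hρ : Differentiable ℝ ρ) (hφ : Differentiable ℝ φ)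
    (hρpos : ∀ t : ℝ, 0 < ρ t)
    (hxρφ : ∀ t : ℝ, x t = ρ t * Real.cos (φ t))
    (hyρφ : ∀ t : ℝ, y t = ρ t * Real.sin (φ t)) :
    ∀ s t : ℝ, ρ s ^ 2 * deriv φ s = ρ t ^ 2 * deriv φ t :=
  angular_momentum_constant_general x y z ρ φ hx hx' hy hy' h1 h2 hρ hφ hxρφ hyρφ
end

section
/- Let x, y, z : ℝ → ℝ be twice differentiable functions satisfying x'' = x·z', y'' = y·z', z'' = −(x·x' + y·y') with unit speed x'² + y'² + z'² = 1. Set p₀ = x(0)·y'(0) − x'(0)·y(0), q₀ = z'(0) + (x(0)² + y(0)²)/2, and f(t) = x(t)² + y(t)². Then for all t: f'(t)² + f(t)³ − 4q₀·f(t)² + 4(q₀² − 1)·f(t) + 4p₀² = 0. -/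
/-! The quantities `p = x y' − x' y` (a Wronskian, since `x` and `y` solve the same linear
equation `u'' = z' u`) and `q = z' + (x² + y²)/2` are first integrals. Lagrange's identity
`(x x' + y y')² + (x y' − x' y)² = (x² + y²)(x'² + y'²)` together with unit speed gives
`f'²/4 + p² = f (1 − z'²)` with `z' = q − f/2`, which expands to the stated cubic. -/

theorem wronskian_eq_of_deriv_deriv_eq_mul {u v w : ℝ → ℝ}
    (hu : Differentiable ℝ u) (hu' : Differentiable ℝ (deriv u))
    (hv : Differentiable ℝ v) (hv' : Differentiable ℝ (deriv v))
    (huw : ∀ t, deriv (deriv u) t = u t * w t) (hvw : ∀ t, deriv (deriv v) t = v t * w t)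
    (t s : ℝ) :
    u t * deriv v t - deriv u t * v t = u s * deriv v s - deriv u s * v s := by
  have hW : ∀ r, HasDerivAt (fun r => u r * deriv v r - deriv u r * v r) 0 r := fun r => by
    refine (((hu r).hasDerivAt.mul (hv' r).hasDerivAt).sub
      ((hu' r).hasDerivAt.mul (hv r).hasDerivAt)).congr_deriv ?_
    rw [huw, hvw]
    ring
  exact is_const_of_deriv_eq_zero (fun r => (hW r).differentiableAt) (fun r => (hW r).deriv) t s

theorem hasDerivAt_sq_add_sq {x y : ℝ → ℝ} (hx : Differentiable ℝ x) (hy : Differentiable ℝ y)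
    (t : ℝ) :
    HasDerivAt (fun t => x t ^ 2 + y t ^ 2) (2 * (x t * deriv x t + y t * deriv y t)) t := by
  refine (((hx t).hasDerivAt.pow 2).add ((hy t).hasDerivAt.pow 2)).congr_deriv ?_
  ring

theorem deriv_add_half_sq_add_sq_eq {x y z : ℝ → ℝ}
    (hx : Differentiable ℝ x) (hy : Differentiable ℝ y) (hz' : Differentiable ℝ (deriv z))
    (hzz : ∀ t, deriv (deriv z) t = -(x t * deriv x t + y t * deriv y t)) (t s : ℝ) :
    deriv z t + (x t ^ 2 + y t ^ 2) / 2 = deriv z s + (x s ^ 2 + y s ^ 2) / 2 := by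
  have hQ : ∀ r, HasDerivAt (fun r => deriv z r + (x r ^ 2 + y r ^ 2) / 2) 0 r := fun r => by
    refine ((hz' r).hasDerivAt.add ((hasDerivAt_sq_add_sq hx hy r).div_const 2)).congr_deriv ?_
    rw [hzz]
    ring
  exact is_const_of_deriv_eq_zero (fun r => (hQ r).differentiableAt) (fun r => (hQ r).deriv) t s

theorem squared_radius_ode_general (x y z : ℝ → ℝ)
    (hx : Differentiable ℝ x) (hx' : Differentiable ℝ (deriv x))
    (hy : Differentiable ℝ y) (hy' : Differentiable ℝ (deriv y))
    (hz' : Differentiable ℝ (deriv z))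
    (h1 : ∀ t : ℝ, deriv (deriv x) t = x t * deriv z t)
    (h2 : ∀ t : ℝ, deriv (deriv y) t = y t * deriv z t)
    (h3 : ∀ t : ℝ, deriv (deriv z) t = -(x t * deriv x t + y t * deriv y t))
    (hunit : ∀ t : ℝ, deriv x t ^ 2 + deriv y t ^ 2 + deriv z t ^ 2 = 1)
    (p₀ q₀ : ℝ)
    (hp₀ : p₀ = x 0 * deriv y 0 - deriv x 0 * y 0)
    (hq₀ : q₀ = deriv z 0 + (x 0 ^ 2 + y 0 ^ 2) / 2)
    (f : ℝ → ℝ) (hf : f = fun t => x t ^ 2 + y t ^ 2) :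
    ∀ t : ℝ,
      deriv f t ^ 2 + f t ^ 3 - 4 * q₀ * f t ^ 2 + 4 * (q₀ ^ 2 - 1) * f t + 4 * p₀ ^ 2 = 0 := by
  intro t
  have hp : p₀ = x t * deriv y t - deriv x t * y t :=
    hp₀.trans (wronskian_eq_of_deriv_deriv_eq_mul hx hx' hy hy' h1 h2 0 t)
  have hq : q₀ = deriv z t + f t / 2 := by
    rw [hq₀, hf]
    exact deriv_add_half_sq_add_sq_eq hx hy hz' h3 0 t
  have hf' : deriv f t = 2 * (x t * deriv x t + y t * deriv y t) := by
    rw [hf]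
    exact (hasDerivAt_sq_add_sq hx hy t).deriv
  have hlagrange : (x t * deriv x t + y t * deriv y t) ^ 2 + p₀ ^ 2
      = f t * (1 - (q₀ - f t / 2) ^ 2) := by
    rw [hp, hq, hf, ← hunit t]
    ring
  rw [hf']
  linear_combination 4 * hlagrange

/-- For a unit-speed solution of the system `x'' = x·z'`, `y'' = y·z'`,
`z'' = −(x·x' + y·y')`, the function `f = x² + y²` satisfies the ODE
`f'² + f³ − 4q₀f² + 4(q₀² − 1)f + 4p₀² = 0`, where `p₀ = x(0)y'(0) − x'(0)y(0)` and
`q₀ = z'(0) + (x(0)² + y(0)²)/2`. -/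
theorem squared_radius_ode (x y z : ℝ → ℝ)
    (hx : Differentiable ℝ x) (hx' : Differentiable ℝ (deriv x))
    (hy : Differentiable ℝ y) (hy' : Differentiable ℝ (deriv y))
    (hz : Differentiable ℝ z) (hz' : Differentiable ℝ (deriv z))
    (h1 : ∀ t : ℝ, deriv (deriv x) t = x t * deriv z t)
    (h2 : ∀ t : ℝ, deriv (deriv y) t = y t * deriv z t)
    (h3 : ∀ t : ℝ, deriv (deriv z) t = -(x t * deriv x t + y t * deriv y t))
    (hunit : ∀ t : ℝ, deriv x t ^ 2 + deriv y t ^ 2 + deriv z t ^ 2 = 1)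
    (p₀ q₀ : ℝ)
    (hp₀ : p₀ = x 0 * deriv y 0 - deriv x 0 * y 0)
    (hq₀ : q₀ = deriv z 0 + (x 0 ^ 2 + y 0 ^ 2) / 2)
    (f : ℝ → ℝ) (hf : f = fun t => x t ^ 2 + y t ^ 2) :
    ∀ t : ℝ,
      deriv f t ^ 2 + f t ^ 3 - 4 * q₀ * f t ^ 2 + 4 * (q₀ ^ 2 - 1) * f t + 4 * p₀ ^ 2 = 0 :=
  squared_radius_ode_general x y z hx hx' hy hy' hz' h1 h2 h3 hunit p₀ q₀ hp₀ hq₀ f hf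
end

section
/- For any φ₀, t₀, z₀ ∈ ℝ, the curve γ(t) = (x(t), y(t), z(t)) with x(t) = 2cos(φ₀)/cosh(t − t₀), y(t) = 2sin(φ₀)/cosh(t − t₀), z(t) = z₀ + t − 2(tanh(t − t₀) + tanh(t₀)) satisfies the system x'' = x·z', y'' = y·z', z'' = −(x·x' + y·y') and is unit-speed: x'(t)² + y'(t)² + z'(t)² = 1 for all t ∈ ℝ. -/
/-! With `s = 1 / cosh (t - t₀)` and `w = tanh (t - t₀)` one has `s' = -s w`, `w' = s²` and
`s² + w² = 1`. The curve is `x = a s`, `y = b s`, `z' = 1 - 2 s²` with `a² + b² = 4`, so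
`x'' = a s (w² - s²) = x z'`, `z'' = 4 s² w = -(x x' + y y')`, and the speed is
`4 s² w² + (1 - 2 s²)² = 1 + 4 s² (s² + w² - 1) = 1`. -/

open Real

lemma Real.hasDerivAt_tanh (u : ℝ) : HasDerivAt tanh (1 / cosh u ^ 2) u := by
  have h := (hasDerivAt_sinh u).div (hasDerivAt_cosh u) (cosh_pos u).ne'
  rw [show tanh = fun u => sinh u / cosh u from funext tanh_eq_sinh_div_cosh]
  refine h.congr_deriv ?_
  rw [← cosh_sq_sub_sinh_sq u]
  ring

lemma hasDerivAt_const_div_cosh (c u : ℝ) :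
    HasDerivAt (fun u => c / cosh u) (-c * (sinh u / cosh u ^ 2)) u := by
  refine ((hasDerivAt_const u c).div (hasDerivAt_cosh u) (cosh_pos u).ne').congr_deriv ?_
  ring

lemma hasDerivAt_sinh_div_cosh_sq (u : ℝ) :
    HasDerivAt (fun u => sinh u / cosh u ^ 2)
      ((cosh u ^ 2 - 2 * sinh u ^ 2) / cosh u ^ 3) u := by
  have hc := (cosh_pos u).ne'
  refine ((hasDerivAt_sinh u).div ((hasDerivAt_cosh u).pow 2) (pow_ne_zero 2 hc)).congr_deriv ?_
  simp only [Pi.pow_apply]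
  field_simp
  ring

lemma hasDerivAt_const_div_cosh_sq (c u : ℝ) :
    HasDerivAt (fun u => c / cosh u ^ 2) (-2 * c * sinh u / cosh u ^ 3) u := by
  have hc := (cosh_pos u).ne'
  refine ((hasDerivAt_const u c).div ((hasDerivAt_cosh u).pow 2) (pow_ne_zero 2 hc)).congr_deriv ?_
  simp only [Pi.pow_apply]
  field_simp
  ring

section Shifted

variable (t₀ : ℝ)

lemma deriv_const_div_cosh_sub (c : ℝ) :
    deriv (fun t => c / cosh (t - t₀)) = fun t => -c * (sinh (t - t₀) / cosh (t - t₀) ^ 2) :=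
  funext fun t => ((hasDerivAt_const_div_cosh c (t - t₀)).comp_sub_const t t₀).deriv

lemma deriv_deriv_const_div_cosh_sub (c t : ℝ) :
    deriv (deriv fun t => c / cosh (t - t₀)) t =
      c / cosh (t - t₀) * (1 - 2 / cosh (t - t₀) ^ 2) := by
  rw [deriv_const_div_cosh_sub,
    (((hasDerivAt_sinh_div_cosh_sq (t - t₀)).comp_sub_const t t₀).const_mul (-c)).deriv]
  have hc := (cosh_pos (t - t₀)).ne'
  field_simp
  linear_combination (-2 * c) * cosh_sq_sub_sinh_sq (t - t₀)

lemma deriv_add_sub_two_mul_tanh_sub (z₀ : ℝ) :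
    deriv (fun t => z₀ + t - 2 * (tanh (t - t₀) + tanh t₀)) =
      fun t => 1 - 2 / cosh (t - t₀) ^ 2 := by
  funext t
  refine (((hasDerivAt_const t z₀).add (hasDerivAt_id t)).sub
    ((((hasDerivAt_tanh (t - t₀)).comp_sub_const t t₀).add_const _).const_mul 2)).deriv.trans ?_
  ring

lemma deriv_deriv_add_sub_two_mul_tanh_sub (z₀ t : ℝ) :
    deriv (deriv fun t => z₀ + t - 2 * (tanh (t - t₀) + tanh t₀)) t =
      4 * sinh (t - t₀) / cosh (t - t₀) ^ 3 := by
  rw [deriv_add_sub_two_mul_tanh_sub,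
    (((hasDerivAt_const_div_cosh_sq 2 (t - t₀)).comp_sub_const t t₀).const_sub 1).deriv]
  ring

end Shifted

/-- The explicit planar curve `x(t) = 2cos(φ₀)/cosh(t − t₀)`, `y(t) = 2sin(φ₀)/cosh(t − t₀)`,
`z(t) = z₀ + t − 2(tanh(t − t₀) + tanh t₀)` satisfies the system `x'' = x·z'`, `y'' = y·z'`,
`z'' = −(x·x' + y·y')` and has unit speed. -/
theorem explicit_planar_magnetic_curve (φ₀ t₀ z₀ : ℝ)
    (x y z : ℝ → ℝ)
    (hx : x = fun t => 2 * Real.cos φ₀ / Real.cosh (t - t₀))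
    (hy : y = fun t => 2 * Real.sin φ₀ / Real.cosh (t - t₀))
    (hz : z = fun t => z₀ + t - 2 * (Real.tanh (t - t₀) + Real.tanh t₀)) :
    (∀ t : ℝ, deriv (deriv x) t = x t * deriv z t) ∧
    (∀ t : ℝ, deriv (deriv y) t = y t * deriv z t) ∧
    (∀ t : ℝ, deriv (deriv z) t = -(x t * deriv x t + y t * deriv y t)) ∧
    (∀ t : ℝ, deriv x t ^ 2 + deriv y t ^ 2 + deriv z t ^ 2 = 1) := by
  subst hx hy hz
  refine ⟨fun t => ?_, fun t => ?_, fun t => ?_, fun t => ?_⟩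
  · rw [deriv_deriv_const_div_cosh_sub, deriv_add_sub_two_mul_tanh_sub]
  · rw [deriv_deriv_const_div_cosh_sub, deriv_add_sub_two_mul_tanh_sub]
  · rw [deriv_deriv_add_sub_two_mul_tanh_sub, deriv_const_div_cosh_sub, deriv_const_div_cosh_sub]
    have hc := (cosh_pos (t - t₀)).ne'
    field_simp
    linear_combination (-4 * sinh (t - t₀)) * sin_sq_add_cos_sq φ₀
  · rw [deriv_const_div_cosh_sub, deriv_const_div_cosh_sub, deriv_add_sub_two_mul_tanh_sub]
    have hc := (cosh_pos (t - t₀)).ne'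
    field_simp
    linear_combination 4 * sinh (t - t₀) ^ 2 * sin_sq_add_cos_sq φ₀ - 4 * cosh_sq_sub_sinh_sq (t - t₀)
end

section
/- Let p₀ ≠ 0 and q₀ be real numbers and set P(X) = X³ − 4q₀X² + 4(q₀² − 1)X + 4p₀². If there exists a nonconstant differentiable function f : I → ℝ on a nondegenerate interval I with f(t) > 0 and f'(t)² + P(f(t)) = 0 for all t ∈ I, then P has three distinct real roots, exactly two of which are positive and one of which is negative. -/
/-! Along the solution `f` the ODE forces `P (f t) = -(f')² ≤ 0`, and nonconstancy gives two
such values `0 < u < v`. Since `P 0 = 4 p₀² > 0`, the intermediate value theorem yields a root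
in `(0, u]`, and since `P → +∞` a root in `[v, ∞)`. Dividing out these two roots leaves a linear
factor `X - C`, and `P 0 = -A B C > 0` forces `C < 0`. -/

open Filter Polynomial

noncomputable def monicCubic (b c d x : ℝ) : ℝ := x ^ 3 + b * x ^ 2 + c * x + d

namespace monicCubic

variable (b c d : ℝ)

@[simp]
theorem apply_zero : monicCubic b c d 0 = d := by
  simp [monicCubic]

theorem continuous : Continuous (monicCubic b c d) := by
  unfold monicCubic
  fun_prop

theorem tendsto_atTop : Tendsto (monicCubic b c d) atTop atTop := by
  set P : ℝ[X] := X ^ 3 + C b * X ^ 2 + C c * X + C d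
  have hdeg : P.natDegree = 3 := by unfold P; compute_degree!
  have hmon : P.Monic := by unfold P; monicity!
  unfold monicCubic
  simpa [P] using P.tendsto_atTop_of_leadingCoeff_nonneg
    (natDegree_pos_iff_degree_pos.mp (by omega)) (by rw [hmon.leadingCoeff]; exact zero_le_one)

theorem eq_mul_of_roots {A B : ℝ} (hAB : A ≠ B)
    (hA : monicCubic b c d A = 0) (hB : monicCubic b c d B = 0) (x : ℝ) :
    monicCubic b c d x = (x - A) * (x - B) * (x - (-b - A - B)) := by
  unfold monicCubic at *
  have hquad : A ^ 2 + A * B + B ^ 2 + b * (A + B) + c = 0 := by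
    have h : (A - B) * (A ^ 2 + A * B + B ^ 2 + b * (A + B) + c) = 0 := by
      linear_combination hA - hB
    exact (mul_eq_zero.mp h).resolve_left (sub_ne_zero.mpr hAB)
  linear_combination hA + (x - A) * hquad

theorem exists_root_Ioc {u : ℝ} (hd : 0 < d) (hu : 0 < u) (hPu : monicCubic b c d u ≤ 0) :
    ∃ A ∈ Set.Ioc 0 u, monicCubic b c d A = 0 := by
  obtain ⟨A, ⟨hA0, hAu⟩, hPA⟩ := intermediate_value_Icc' hu.le (continuous b c d).continuousOn
    ⟨hPu, (apply_zero b c d).symm ▸ hd.le⟩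
  refine ⟨A, ⟨hA0.lt_of_ne ?_, hAu⟩, hPA⟩
  rintro rfl
  simp only [apply_zero] at hPA
  exact hd.ne' hPA

theorem exists_root_ge {v : ℝ} (hPv : monicCubic b c d v ≤ 0) :
    ∃ B, v ≤ B ∧ monicCubic b c d B = 0 := by
  obtain ⟨w, hPw, hvw⟩ :=
    (((tendsto_atTop b c d).eventually_ge_atTop 0).and (eventually_ge_atTop v)).exists
  obtain ⟨B, ⟨hvB, -⟩, hPB⟩ := intermediate_value_Icc hvw (continuous b c d).continuousOn ⟨hPv, hPw⟩
  exact ⟨B, hvB, hPB⟩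

theorem exists_two_pos_one_neg_roots {u v : ℝ} (hd : 0 < d) (hu : 0 < u) (hv : 0 < v)
    (huv : u ≠ v) (hPu : monicCubic b c d u ≤ 0) (hPv : monicCubic b c d v ≤ 0) :
    ∃ A B C : ℝ, A ≠ B ∧ A ≠ C ∧ B ≠ C ∧ 0 < A ∧ 0 < B ∧ C < 0 ∧
      ∀ x, monicCubic b c d x = (x - A) * (x - B) * (x - C) := by
  wlog huv_lt : u < v generalizing u v
  · exact this hv hu huv.symm hPv hPu (huv.lt_or_gt.resolve_left huv_lt)
  obtain ⟨A, ⟨hA, hAu⟩, hPA⟩ := exists_root_Ioc b c d hd hu hPu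
  obtain ⟨B, hvB, hPB⟩ := exists_root_ge b c d hPv
  have hAB : A < B := by linarith
  have hfac := eq_mul_of_roots b c d hAB.ne hPA hPB
  have hC : -b - A - B < 0 := by
    have h0 := hfac 0
    rw [apply_zero] at h0
    nlinarith [mul_pos hA (hA.trans hAB)]
  exact ⟨A, B, -b - A - B, hAB.ne, by linarith, by linarith, hA, hA.trans hAB, hC, hfac⟩

end monicCubic

theorem cubic_has_two_positive_one_negative_root_general (p₀ q₀ : ℝ) (hp₀ : p₀ ≠ 0)
    (I : Set ℝ)
    (f : ℝ → ℝ)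
    (hpos : ∀ t ∈ I, 0 < f t)
    (hnonconst : ∃ s ∈ I, ∃ t ∈ I, f s ≠ f t)
    (hode : ∀ t ∈ I,
      deriv f t ^ 2 +
        (f t ^ 3 - 4 * q₀ * f t ^ 2 + 4 * (q₀ ^ 2 - 1) * f t + 4 * p₀ ^ 2) = 0) :
    ∃ A B C : ℝ, A ≠ B ∧ A ≠ C ∧ B ≠ C ∧ 0 < A ∧ 0 < B ∧ C < 0 ∧
      ∀ X : ℝ, X ^ 3 - 4 * q₀ * X ^ 2 + 4 * (q₀ ^ 2 - 1) * X + 4 * p₀ ^ 2 =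
        (X - A) * (X - B) * (X - C) := by
  set P := monicCubic (-4 * q₀) (4 * (q₀ ^ 2 - 1)) (4 * p₀ ^ 2)
  have hP : ∀ X, P X = X ^ 3 - 4 * q₀ * X ^ 2 + 4 * (q₀ ^ 2 - 1) * X + 4 * p₀ ^ 2 := fun X => by
    simp only [P, monicCubic]; ring
  have hP_nonpos : ∀ t ∈ I, P (f t) ≤ 0 := fun t ht => by
    rw [hP]; nlinarith [hode t ht, sq_nonneg (deriv f t)]
  obtain ⟨s, hs, t, ht, hst⟩ := hnonconst
  obtain ⟨A, B, C, hAB, hAC, hBC, hA, hB, hC, hfac⟩ :=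
    monicCubic.exists_two_pos_one_neg_roots _ _ _ (by positivity) (hpos s hs) (hpos t ht) hst
      (hP_nonpos s hs) (hP_nonpos t ht)
  exact ⟨A, B, C, hAB, hAC, hBC, hA, hB, hC, fun X => (hP X).symm.trans (hfac X)⟩

/-- If the ODE `f'² + P(f) = 0`, with `P(X) = X³ − 4q₀X² + 4(q₀² − 1)X + 4p₀²` and
`p₀ ≠ 0`, admits a nonconstant positive differentiable solution on a nondegenerate
interval, then `P` has three distinct real roots, exactly two positive and one negative. -/
theorem cubic_has_two_positive_one_negative_root (p₀ q₀ : ℝ) (hp₀ : p₀ ≠ 0)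
    (I : Set ℝ) (hI : I.OrdConnected)
    (a b : ℝ) (ha : a ∈ I) (hb : b ∈ I) (hab : a ≠ b)
    (f : ℝ → ℝ)
    (hdiff : ∀ t ∈ I, DifferentiableAt ℝ f t)
    (hpos : ∀ t ∈ I, 0 < f t)
    (hnonconst : ∃ s ∈ I, ∃ t ∈ I, f s ≠ f t)
    (hode : ∀ t ∈ I,
      deriv f t ^ 2 +
        (f t ^ 3 - 4 * q₀ * f t ^ 2 + 4 * (q₀ ^ 2 - 1) * f t + 4 * p₀ ^ 2) = 0) :
    ∃ A B C : ℝ, A ≠ B ∧ A ≠ C ∧ B ≠ C ∧ 0 < A ∧ 0 < B ∧ C < 0 ∧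
      ∀ X : ℝ, X ^ 3 - 4 * q₀ * X ^ 2 + 4 * (q₀ ^ 2 - 1) * X + 4 * p₀ ^ 2 =
        (X - A) * (X - B) * (X - C) :=
  cubic_has_two_positive_one_negative_root_general p₀ q₀ hp₀ I f hpos hnonconst hode
end

section
/- Let ρ₀ > 0, φ₀, z₀ ∈ ℝ and ε ∈ {1, −1}. Set ω = √((√(ρ₀⁴ + 4) − ρ₀²)/2). Then the curve γ(t) = (ρ₀·cos(φ₀ − εωt), ρ₀·sin(φ₀ − εωt), z₀ − ω²t) satisfies the system x'' = x·z', y'' = y·z', z'' = −(x·x' + y·y') and is unit-speed: x'(t)² + y'(t)² + z'(t)² = 1 for all t ∈ ℝ; moreover x(t)² + y(t)² = ρ₀² for all t. -/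
/-!
The horizontal motion is a uniform rotation with angular speed `εω`, so `x'' = -ω² x = x z'` and
likewise for `y`, while `x x' + y y' = 0 = z''` because the radius is constant. The squared speed is
`ρ₀² ω² + ω⁴`, which equals `1` because `ω²` is the positive root of `q² + ρ₀² q - 1`.
-/

open Real

theorem hasDerivAt_sub_mul (φ c t : ℝ) : HasDerivAt (fun t => φ - c * t) (-c) t := by
  simpa using ((hasDerivAt_id t).const_mul c).const_sub φ

theorem deriv_mul_cos_sub_mul (r φ c : ℝ) :
    deriv (fun t => r * cos (φ - c * t)) = fun t => r * c * sin (φ - c * t) := by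
  funext t
  exact (((hasDerivAt_sub_mul φ c t).cos).const_mul r).deriv.trans (by ring)

theorem deriv_mul_sin_sub_mul (r φ c : ℝ) :
    deriv (fun t => r * sin (φ - c * t)) = fun t => -(r * c) * cos (φ - c * t) := by
  funext t
  exact (((hasDerivAt_sub_mul φ c t).sin).const_mul r).deriv.trans (by ring)

theorem deriv_sub_mul (φ c : ℝ) : deriv (fun t => φ - c * t) = fun _ => -c :=
  funext fun t => (hasDerivAt_sub_mul φ c t).deriv

theorem le_sqrt_sq_add_four (a : ℝ) : a ≤ √(a ^ 2 + 4) :=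
  le_sqrt_of_sq_le (by linarith)

theorem sq_add_mul_eq_one (a : ℝ) :
    ((√(a ^ 2 + 4) - a) / 2) ^ 2 + a * ((√(a ^ 2 + 4) - a) / 2) = 1 := by
  have := sq_sqrt (show 0 ≤ a ^ 2 + 4 by positivity)
  linear_combination this / 4

theorem pow_four_add_sq_mul_sq_eq_one {ρ ω : ℝ} (hω : ω = √((√(ρ ^ 4 + 4) - ρ ^ 2) / 2)) :
    ω ^ 4 + ρ ^ 2 * ω ^ 2 = 1 := by
  have hρ : ρ ^ 4 = (ρ ^ 2) ^ 2 := by ring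
  have hω2 : ω ^ 2 = (√((ρ ^ 2) ^ 2 + 4) - ρ ^ 2) / 2 := by
    rw [hω, hρ, sq_sqrt (by linarith [le_sqrt_sq_add_four (ρ ^ 2)])]
  rw [show ω ^ 4 = (ω ^ 2) ^ 2 by ring, hω2]
  exact sq_add_mul_eq_one _

theorem helix_magnetic_curve_general (ρ₀ φ₀ z₀ ε : ℝ) (hε : ε = 1 ∨ ε = -1)
    (ω : ℝ) (hω : ω = Real.sqrt ((Real.sqrt (ρ₀ ^ 4 + 4) - ρ₀ ^ 2) / 2))
    (x y z : ℝ → ℝ)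
    (hx : x = fun t => ρ₀ * Real.cos (φ₀ - ε * ω * t))
    (hy : y = fun t => ρ₀ * Real.sin (φ₀ - ε * ω * t))
    (hz : z = fun t => z₀ - ω ^ 2 * t) :
    (∀ t : ℝ, deriv (deriv x) t = x t * deriv z t) ∧
    (∀ t : ℝ, deriv (deriv y) t = y t * deriv z t) ∧
    (∀ t : ℝ, deriv (deriv z) t = -(x t * deriv x t + y t * deriv y t)) ∧
    (∀ t : ℝ, deriv x t ^ 2 + deriv y t ^ 2 + deriv z t ^ 2 = 1) ∧
    (∀ t : ℝ, x t ^ 2 + y t ^ 2 = ρ₀ ^ 2) := by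
  have hε2 : ε ^ 2 = 1 := by rcases hε with rfl | rfl <;> norm_num
  have hω4 := pow_four_add_sq_mul_sq_eq_one hω
  subst hx hy hz
  simp only [deriv_mul_cos_sub_mul, deriv_mul_sin_sub_mul, deriv_sub_mul, deriv_const']
  refine ⟨fun t => ?_, fun t => ?_, fun t => ?_, fun t => ?_, fun t => ?_⟩ <;>
    have hpyth := sin_sq_add_cos_sq (φ₀ - ε * ω * t)
  · linear_combination -(ρ₀ * ω ^ 2 * cos (φ₀ - ε * ω * t)) * hε2
  · linear_combination -(ρ₀ * ω ^ 2 * sin (φ₀ - ε * ω * t)) * hε2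
  · ring
  · linear_combination ρ₀ ^ 2 * ε ^ 2 * ω ^ 2 * hpyth + ρ₀ ^ 2 * ω ^ 2 * hε2 + hω4
  · linear_combination ρ₀ ^ 2 * hpyth

/-- The circular helices: with `ω = √((√(ρ₀⁴ + 4) − ρ₀²)/2)`, the curve
`x(t) = ρ₀cos(φ₀ − εωt)`, `y(t) = ρ₀sin(φ₀ − εωt)`, `z(t) = z₀ − ω²t` satisfies the system
`x'' = x·z'`, `y'' = y·z'`, `z'' = −(x·x' + y·y')`, has unit speed, and lies on the
cylinder of radius `ρ₀`. -/
theorem helix_magnetic_curve (ρ₀ φ₀ z₀ ε : ℝ) (hρ₀ : 0 < ρ₀) (hε : ε = 1 ∨ ε = -1)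
    (ω : ℝ) (hω : ω = Real.sqrt ((Real.sqrt (ρ₀ ^ 4 + 4) - ρ₀ ^ 2) / 2))
    (x y z : ℝ → ℝ)
    (hx : x = fun t => ρ₀ * Real.cos (φ₀ - ε * ω * t))
    (hy : y = fun t => ρ₀ * Real.sin (φ₀ - ε * ω * t))
    (hz : z = fun t => z₀ - ω ^ 2 * t) :
    (∀ t : ℝ, deriv (deriv x) t = x t * deriv z t) ∧
    (∀ t : ℝ, deriv (deriv y) t = y t * deriv z t) ∧
    (∀ t : ℝ, deriv (deriv z) t = -(x t * deriv x t + y t * deriv y t)) ∧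
    (∀ t : ℝ, deriv x t ^ 2 + deriv y t ^ 2 + deriv z t ^ 2 = 1) ∧
    (∀ t : ℝ, x t ^ 2 + y t ^ 2 = ρ₀ ^ 2) :=
  helix_magnetic_curve_general ρ₀ φ₀ z₀ ε hε ω hω x y z hx hy hz
end

section
/- Let s ≠ 0 and let γ(t) = (x(t), y(t), z(t)) : ℝ → ℝ³ be three times differentiable satisfying x'' = −s·y', y'' = s·x', z'' = 0, with unit speed x'² + y'² + z'² = 1 and z'(0) = w₀. Then for all t, the scalar triple product det(γ'(t), γ''(t), γ'''(t)) equals s³·w₀·(1 − w₀²). -/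
/-!
With `ξ = (0, 0, s)` the Lorentz equation reads `γ'' = ξ × γ'`, so `γ''' = ξ × (ξ × γ')` and
`ξ ⬝ γ'` is conserved, equal to `s w₀`. For any `ξ, v` one has
`det(v, ξ × v, ξ × (ξ × v)) = (ξ ⬝ v) |ξ × v|² = (ξ ⬝ v) (|ξ|² |v|² - (ξ ⬝ v)²)`,
which for the unit vector `v = γ'` is `s w₀ (s² - s² w₀²)`.
-/

open Matrix

theorem det_cross_cross {R : Type*} [CommRing R] (ξ v : Fin 3 → R) :
    det (of ![v, ξ ⨯₃ v, ξ ⨯₃ (ξ ⨯₃ v)]) =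
      (ξ ⬝ᵥ v) * ((ξ ⬝ᵥ ξ) * (v ⬝ᵥ v) - (ξ ⬝ᵥ v) ^ 2) := by
  change det ![v, _, _] = _
  rw [← triple_product_eq_det, cross_cross_eq_smul_sub_smul', dot_self_cross, zero_smul, sub_zero,
    dotProduct_smul, cross_dot_cross, smul_eq_mul, dotProduct_comm v ξ]
  ring

section FiniteDimensional
variable {E F : Type*} [NormedAddCommGroup E] [NormedSpace ℝ E] [FiniteDimensional ℝ E]
  [NormedAddCommGroup F] [NormedSpace ℝ F]

theorem LinearMap.deriv_comp_of_finiteDimensional (L : E →ₗ[ℝ] F) {f : ℝ → E}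
    {t : ℝ} (hf : DifferentiableAt ℝ f t) : deriv (fun u => L (f u)) t = L (deriv f t) :=
  (L.toContinuousLinearMap.hasFDerivAt.comp_hasDerivAt t hf.hasDerivAt).deriv

theorem LinearMap.differentiable_comp_of_finiteDimensional (L : E →ₗ[ℝ] F) {f : ℝ → E}
    (hf : Differentiable ℝ f) : Differentiable ℝ (fun u => L (f u)) :=
  L.toContinuousLinearMap.differentiable.comp hf

end FiniteDimensional

section Lorentz
variable {ξ : Fin 3 → ℝ} {v : ℝ → Fin 3 → ℝ}

theorem deriv_deriv_eq_cross_cross (hv : Differentiable ℝ v)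
    (hlorentz : ∀ t, deriv v t = ξ ⨯₃ v t) (t : ℝ) : deriv (deriv v) t = ξ ⨯₃ (ξ ⨯₃ v t) := by
  rw [show deriv v = fun u => crossProduct ξ (v u) from funext hlorentz,
    LinearMap.deriv_comp_of_finiteDimensional _ (hv t), hlorentz]

theorem dotProduct_eq_of_deriv_eq_cross (hv : Differentiable ℝ v)
    (hlorentz : ∀ t, deriv v t = ξ ⨯₃ v t) (t : ℝ) : ξ ⬝ᵥ v t = ξ ⬝ᵥ v 0 :=
  is_const_of_deriv_eq_zero
    (LinearMap.differentiable_comp_of_finiteDimensional (dotProductBilin ℝ ℝ ξ) hv)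
    (fun u => by
      rw [LinearMap.deriv_comp_of_finiteDimensional _ (hv u)]
      simp [hlorentz, dot_self_cross]) t 0

end Lorentz

theorem classical_magnetic_torsion_general (s w₀ : ℝ)
    (γ : ℝ → Fin 3 → ℝ)
    (hγ1 : Differentiable ℝ (deriv γ))
    (h1 : ∀ t : ℝ, deriv (deriv γ) t 0 = -s * deriv γ t 1)
    (h2 : ∀ t : ℝ, deriv (deriv γ) t 1 = s * deriv γ t 0)
    (h3 : ∀ t : ℝ, deriv (deriv γ) t 2 = 0)
    (hunit : ∀ t : ℝ, (deriv γ t 0) ^ 2 + (deriv γ t 1) ^ 2 + (deriv γ t 2) ^ 2 = 1)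
    (hw₀ : deriv γ 0 2 = w₀) :
    ∀ t : ℝ,
      Matrix.det (Matrix.of ![deriv γ t, deriv (deriv γ) t, deriv (deriv (deriv γ)) t]) =
        s ^ 3 * w₀ * (1 - w₀ ^ 2) := by
  intro t
  set ξ : Fin 3 → ℝ := ![0, 0, s]
  have hlorentz : ∀ t, deriv (deriv γ) t = ξ ⨯₃ deriv γ t := fun t => by
    ext i; fin_cases i <;> simp [ξ, cross_apply, h1, h2, h3]
  have hconst : ξ ⬝ᵥ deriv γ t = s * w₀ := by
    rw [dotProduct_eq_of_deriv_eq_cross hγ1 hlorentz t, ← hw₀]; simp [ξ, vecHead, vecTail]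
  have hspeed : deriv γ t ⬝ᵥ deriv γ t = 1 := by
    simpa [dotProduct, Fin.sum_univ_three, sq] using hunit t
  have hstrength : ξ ⬝ᵥ ξ = s ^ 2 := by simp [ξ, sq]
  rw [deriv_deriv_eq_cross_cross hγ1 hlorentz, hlorentz, det_cross_cross, hconst, hspeed,
    hstrength]
  ring

/-- For a unit-speed trajectory `γ` of the classical magnetic field of strength `s ≠ 0`
(`x'' = −s·y'`, `y'' = s·x'`, `z'' = 0`) with `z'(0) = w₀`, the scalar triple product
`det(γ', γ'', γ''')` equals `s³·w₀·(1 − w₀²)` (encoding the torsion `τ = s·w₀`). -/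
theorem classical_magnetic_torsion (s w₀ : ℝ) (hs : s ≠ 0)
    (γ : ℝ → Fin 3 → ℝ)
    (hγ : Differentiable ℝ γ)
    (hγ1 : Differentiable ℝ (deriv γ))
    (hγ2 : Differentiable ℝ (deriv (deriv γ)))
    (h1 : ∀ t : ℝ, deriv (deriv γ) t 0 = -s * deriv γ t 1)
    (h2 : ∀ t : ℝ, deriv (deriv γ) t 1 = s * deriv γ t 0)
    (h3 : ∀ t : ℝ, deriv (deriv γ) t 2 = 0)
    (hunit : ∀ t : ℝ, (deriv γ t 0) ^ 2 + (deriv γ t 1) ^ 2 + (deriv γ t 2) ^ 2 = 1)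
    (hw₀ : deriv γ 0 2 = w₀) :
    ∀ t : ℝ,
      Matrix.det (Matrix.of ![deriv γ t, deriv (deriv γ) t, deriv (deriv (deriv γ)) t]) =
        s ^ 3 * w₀ * (1 - w₀ ^ 2) :=
  classical_magnetic_torsion_general s w₀ γ hγ1 h1 h2 h3 hunit hw₀
end
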